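/- arXiv:1811.00090 — 5 statements merged into one kernel-verified Lean document; each statement's English description precedes it below -/
import Mathlib

section
/- Let Π and Π' be two walks with the same initial state s₀, and suppose V takes the same value at the final state of Π as at the final state of Π'. Then the ρ-weight of Π is at most the ρ-weight of Π' if and only if the r-weight of Π is at most the r-weight of Π'. -/
/-- For two walks with the same initial state whose final states have equal
potential, comparison of ρ-weights coincides with comparison of r-weights. -/
theorem shaped_weight_compare {S A : Type*} (r : S → A → S → ℝ) (V : S → ℝ)
    (ρ : S → A → S → ℝ)
    (hρ : ∀ s a s', ρ s a s' = r s a s' - V s + V s')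
    (n : ℕ) (s : ℕ → S) (a : ℕ → A)
    (m : ℕ) (s' : ℕ → S) (a' : ℕ → A)
    (hstart : s 0 = s' 0) (hend : V (s n) = V (s' m)) :
    (∑ i ∈ Finset.range n, ρ (s i) (a i) (s (i + 1)) ≤
      ∑ i ∈ Finset.range m, ρ (s' i) (a' i) (s' (i + 1))) ↔
    (∑ i ∈ Finset.range n, r (s i) (a i) (s (i + 1)) ≤
      ∑ i ∈ Finset.range m, r (s' i) (a' i) (s' (i + 1))) := by
  have key : ∀ (k : ℕ) (t : ℕ → S) (b : ℕ → A),
      ∑ i ∈ Finset.range k, ρ (t i) (b i) (t (i + 1)) =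
      ∑ i ∈ Finset.range k, r (t i) (b i) (t (i + 1)) + (V (t k) - V (t 0)) := by
    intro k t b
    have h1 : ∀ i ∈ Finset.range k, ρ (t i) (b i) (t (i + 1)) =
        r (t i) (b i) (t (i + 1)) + (V (t (i + 1)) - V (t i)) := by
      intro i _; rw [hρ]; ring
    rw [Finset.sum_congr rfl h1, Finset.sum_add_distrib,
      Finset.sum_range_sub (fun i => V (t i))]
  rw [key n s a, key m s' a', hstart, hend]
  constructor <;> intro h <;> linarith
end

section
/- Suppose every closed walk has weight at most 0. Then for every vertex s₀, the set of weights of walks starting at s₀ is bounded above. -/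
/-- `IsWalk E n s` : `s 0, s 1, …, s n` is a walk in the graph with edge relation `E`. -/
def IsWalk {S : Type*} (E : S → S → Prop) (n : ℕ) (s : ℕ → S) : Prop :=
  ∀ i < n, E (s i) (s (i + 1))

/-- The weight of the walk `s 0, s 1, …, s n`. -/
def walkWeight {S : Type*} (w : S → S → ℝ) (n : ℕ) (s : ℕ → S) : ℝ :=
  ∑ i ∈ Finset.range n, w (s i) (s (i + 1))

/-!
Any walk of length greater than `|S|` revisits a vertex; cutting out the closed walk between
the two visits gives a shorter walk whose weight is at least as large, since closed walks have
nonpositive weight. Hence every walk weighs at most as much as a walk of length at most `|S|`,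
and those weigh at most `|S| · max 0 (max w)`.
-/

section Walks

variable {S : Type*} {E : S → S → Prop} {w : S → S → ℝ} {m n p : ℕ} {s t : ℕ → S}

theorem isWalk_congr (h : ∀ k ≤ n, s k = t k) : IsWalk E n s ↔ IsWalk E n t := by
  refine forall₂_congr fun k hk => ?_
  rw [h k hk.le, h (k + 1) hk]

theorem walkWeight_congr (h : ∀ k ≤ n, s k = t k) : walkWeight w n s = walkWeight w n t :=
  Finset.sum_congr rfl fun k hk => by
    rw [Finset.mem_range] at hk
    rw [h k hk.le, h (k + 1) hk]

theorem isWalk_add :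
    IsWalk E (m + p) s ↔ IsWalk E m s ∧ IsWalk E p (fun k => s (m + k)) := by
  refine ⟨fun h => ⟨fun k hk => h k (by omega), fun k hk => h (m + k) (by omega)⟩, ?_⟩
  rintro ⟨hm, hp⟩ k hk
  rcases lt_or_ge k m with hkm | hkm
  · exact hm k hkm
  · obtain ⟨k, rfl⟩ := Nat.exists_eq_add_of_le hkm
    exact hp k (by omega)

theorem walkWeight_add :
    walkWeight w (m + p) s = walkWeight w m s + walkWeight w p (fun k => s (m + k)) :=
  Finset.sum_range_add _ m p

def walkAppend (m : ℕ) (s t : ℕ → S) : ℕ → S :=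
  fun k => if k ≤ m then s k else t (k - m)

theorem walkAppend_of_le {k : ℕ} (hk : k ≤ m) : walkAppend m s t k = s k :=
  if_pos hk

theorem walkAppend_add (h : s m = t 0) (k : ℕ) : walkAppend m s t (m + k) = t k := by
  rcases k.eq_zero_or_pos with rfl | hk
  · simpa [walkAppend] using h
  · simp [walkAppend, hk.ne']

theorem IsWalk.append (hs : IsWalk E m s) (ht : IsWalk E p t) (h : s m = t 0) :
    IsWalk E (m + p) (walkAppend m s t) :=
  isWalk_add.2 ⟨(isWalk_congr fun _ => walkAppend_of_le).2 hs,
    (isWalk_congr fun k _ => walkAppend_add h k).2 ht⟩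

theorem walkWeight_append (h : s m = t 0) :
    walkWeight w (m + p) (walkAppend m s t) = walkWeight w m s + walkWeight w p t := by
  rw [walkWeight_add, walkWeight_congr fun _ => walkAppend_of_le,
    walkWeight_congr fun k _ => walkAppend_add h k]

theorem walkWeight_le_length_mul {C : ℝ} (hC : ∀ a b, w a b ≤ C) (n : ℕ) (s : ℕ → S) :
    walkWeight w n s ≤ n * C := by
  simpa [walkWeight] using
    Finset.sum_le_card_nsmul (Finset.range n) _ C fun k _ => hC (s k) (s (k + 1))

variable [Fintype S]

theorem exists_lt_le_card_eq (s : ℕ → S) :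
    ∃ i j, i < j ∧ j ≤ Fintype.card S ∧ s i = s j := by
  obtain ⟨a, b, hab, heq⟩ :=
    Fintype.exists_ne_map_eq_of_card_lt (fun k : Fin (Fintype.card S + 1) => s k) (by simp)
  rcases Fin.lt_or_lt_of_ne hab with h | h
  · exact ⟨a, b, h, Nat.lt_succ_iff.mp b.isLt, heq⟩
  · exact ⟨b, a, h, Nat.lt_succ_iff.mp a.isLt, heq.symm⟩

theorem IsWalk.exists_shorter_of_card_lt
    (hclosed : ∀ n (s : ℕ → S), IsWalk E n s → s n = s 0 → 1 ≤ n → walkWeight w n s ≤ 0)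
    (hs : IsWalk E n s) (hn : Fintype.card S < n) :
    ∃ m < n, ∃ t : ℕ → S, IsWalk E m t ∧ walkWeight w n s ≤ walkWeight w m t := by
  obtain ⟨i, j, hij, hj, hsij⟩ := exists_lt_le_card_eq s
  obtain ⟨d, rfl⟩ := Nat.exists_eq_add_of_le hij.le
  obtain ⟨r, rfl⟩ := Nat.exists_eq_add_of_le (hj.trans hn.le)
  rw [add_assoc] at hs ⊢
  obtain ⟨hprefix, hrest⟩ := isWalk_add.1 hs
  obtain ⟨hcycle, hsuffix⟩ := isWalk_add.1 hrest
  have hcycle_weight : walkWeight w d (fun k => s (i + k)) ≤ 0 :=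
    hclosed _ _ hcycle (by simpa using hsij.symm) (by omega)
  have hjoin : s i = s (i + (d + 0)) := by simpa using hsij
  refine ⟨i + r, by omega, walkAppend i s fun k => s (i + (d + k)),
    hprefix.append hsuffix hjoin, ?_⟩
  rw [walkWeight_append hjoin, walkWeight_add, walkWeight_add]
  linarith

theorem IsWalk.walkWeight_le_card_mul
    (hclosed : ∀ n (s : ℕ → S), IsWalk E n s → s n = s 0 → 1 ≤ n → walkWeight w n s ≤ 0)
    {C : ℝ} (hC : ∀ a b, w a b ≤ C) (hC0 : 0 ≤ C) (hs : IsWalk E n s) :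
    walkWeight w n s ≤ Fintype.card S * C := by
  induction n using Nat.strong_induction_on generalizing s with
  | _ n ih =>
    rcases le_or_gt n (Fintype.card S) with hn | hn
    · exact (walkWeight_le_length_mul hC n s).trans (by gcongr)
    · obtain ⟨m, hm, t, ht, hst⟩ := hs.exists_shorter_of_card_lt hclosed hn
      exact hst.trans (ih m hm ht)

end Walks

/-- If every closed walk has weight at most 0, then the weights of walks starting at
any fixed vertex form a set bounded above. -/
theorem bddAbove_walk_weights {S : Type*} [Fintype S] (E : S → S → Prop) (w : S → S → ℝ)
    (hclosed : ∀ n (s : ℕ → S), IsWalk E n s → s n = s 0 → 1 ≤ n → walkWeight w n s ≤ 0)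
    (s₀ : S) :
    BddAbove {x : ℝ | ∃ (n : ℕ) (s : ℕ → S), IsWalk E n s ∧ s 0 = s₀ ∧ walkWeight w n s = x} := by
  obtain ⟨C, hC⟩ := (Set.finite_range (Function.uncurry w)).bddAbove
  refine ⟨Fintype.card S * max C 0, ?_⟩
  rintro _ ⟨n, s, hs, -, rfl⟩
  exact hs.walkWeight_le_card_mul hclosed
    (fun a b => (hC ⟨(a, b), rfl⟩).trans (le_max_left C 0)) (le_max_right C 0)
end

section
/- Suppose there exists a closed walk with positive weight whose initial vertex is reachable from s₀ (i.e., there is a walk from s₀ to that vertex). Then the set of weights of walks starting at s₀ is not bounded above. -/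
private lemma periodic_sum (g : ℕ → ℝ) (n k : ℕ) :
    ∑ i ∈ Finset.range (k * n), g (i % n) = k * ∑ i ∈ Finset.range n, g (i % n) := by
  induction k with
  | zero => simp
  | succ k ih =>
    rw [Nat.succ_mul, Finset.sum_range_add, ih]
    have h2 : ∑ i ∈ Finset.range n, g ((k * n + i) % n) = ∑ i ∈ Finset.range n, g (i % n) :=
      Finset.sum_congr rfl fun i _ => by
        rw [show k * n + i = n * k + i from by ring, Nat.mul_add_mod]
    rw [h2]
    push_cast
    ring

private lemma mod_succ_eq {S : Type*} (s : ℕ → S) (n : ℕ) (hn : 1 ≤ n) (hsn : s n = s 0)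
    (j : ℕ) : s ((j + 1) % n) = s (j % n + 1) := by
  have h1 : (j + 1) % n = (j % n + 1) % n := by
    rw [show j + 1 = n * (j / n) + (j % n + 1) from by
      have := Nat.div_add_mod j n; omega, Nat.mul_add_mod]
  rcases lt_or_eq_of_le (Nat.succ_le_of_lt (Nat.mod_lt j hn)) with h | h
  · rw [h1, Nat.mod_eq_of_lt h]
  · have h' : j % n + 1 = n := by omega
    rw [h1, h', Nat.mod_self, hsn]

/-- If some positive-weight closed walk starts at a vertex reachable from `s₀`, then
the weights of walks starting at `s₀` are not bounded above. -/
theorem not_bddAbove_walk_weights {S : Type*} [Fintype S] (E : S → S → Prop) (w : S → S → ℝ)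
    (s₀ : S)
    (hpos : ∃ (n : ℕ) (s : ℕ → S), IsWalk E n s ∧ s n = s 0 ∧ 1 ≤ n ∧ 0 < walkWeight w n s ∧
      ∃ (m : ℕ) (u : ℕ → S), IsWalk E m u ∧ u 0 = s₀ ∧ u m = s 0) :
    ¬ BddAbove {x : ℝ | ∃ (n : ℕ) (s : ℕ → S), IsWalk E n s ∧ s 0 = s₀ ∧ walkWeight w n s = x} := by
  rintro ⟨M, hM⟩
  obtain ⟨n, s, hs, hsn, hn1, hw, m, u, hu, hu0, hum⟩ := hpos
  set Wc := walkWeight w n s with hWc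
  set Wu := walkWeight w m u with hWu
  obtain ⟨k, hk⟩ := exists_nat_gt ((M - Wu) / Wc)
  have hk' : M < Wu + k * Wc := by
    have := (div_lt_iff₀ hw).mp hk
    linarith
  -- the concatenated walk
  set v : ℕ → S := fun i => if i ≤ m then u i else s ((i - m) % n) with hv
  have hvm : ∀ i, v (m + i) = s (i % n) := by
    intro i
    simp only [hv]
    rcases Nat.eq_zero_or_pos i with h | h
    · simp [h, hum]
    · rw [if_neg (by omega), Nat.add_sub_cancel_left]
  have hvu : ∀ i ≤ m, v i = u i := by
    intro i hi; simp [hv, hi]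
  -- it is a walk
  have hwalk : IsWalk E (m + k * n) v := by
    intro i hi
    rcases lt_or_ge i m with h | h
    · rw [hvu i (le_of_lt h), hvu (i + 1) (by omega)]
      exact hu i h
    · obtain ⟨j, rfl⟩ := Nat.exists_eq_add_of_le h
      rw [hvm j, show m + j + 1 = m + (j + 1) from by ring, hvm (j + 1),
        mod_succ_eq s n hn1 hsn j]
      exact hs (j % n) (Nat.mod_lt j hn1)
  -- its weight
  have hweight : walkWeight w (m + k * n) v = Wu + k * Wc := by
    rw [walkWeight, Finset.sum_range_add]
    congr 1
    · apply Finset.sum_congr rfl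
      intro i hi
      simp only [Finset.mem_range] at hi
      rw [hvu i (le_of_lt hi), hvu (i + 1) (by omega)]
    · have : ∀ i ∈ Finset.range (k * n),
          w (v (m + i)) (v (m + i + 1)) = w (s (i % n)) (s (i % n + 1)) := by
        intro i _
        rw [hvm i, show m + i + 1 = m + (i + 1) from by ring, hvm (i + 1),
          mod_succ_eq s n hn1 hsn i]
      rw [Finset.sum_congr rfl this, periodic_sum (fun i => w (s i) (s (i + 1))) n k]
      congr 1
      rw [hWc, walkWeight]
      apply Finset.sum_congr rfl
      intro i hi
      simp only [Finset.mem_range] at hi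
      rw [Nat.mod_eq_of_lt hi]
  have hmem : Wu + k * Wc ∈
      {x : ℝ | ∃ (n : ℕ) (s : ℕ → S), IsWalk E n s ∧ s 0 = s₀ ∧ walkWeight w n s = x} := by
    refine ⟨m + k * n, v, hwalk, ?_, hweight⟩
    rw [hvu 0 (Nat.zero_le m), hu0]
  exact absurd (hM hmem) (not_le.mpr hk')
end

section
/- (Termination, graph formulation.) The set of ρ-weights of walks starting at a fixed state s₀ is bounded above if and only if there is no closed walk with positive r-weight whose initial state is reachable from s₀ (i.e., lies at the end of some walk starting at s₀). -/
/-- `IsTWalk T n s a` : the transitions `(s 0, a 0, s 1), …, (s (n-1), a (n-1), s n)`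
are all allowed by `T`. -/
def IsTWalk {S A : Type*} (T : S → A → S → Prop) (n : ℕ) (s : ℕ → S) (a : ℕ → A) : Prop :=
  ∀ i < n, T (s i) (a i) (s (i + 1))

/-- The weight of the walk `(s 0, a 0, s 1), …, (s (n-1), a (n-1), s n)` under the
edge reward `f`. -/
def twalkWeight {S A : Type*} (f : S → A → S → ℝ) (n : ℕ) (s : ℕ → S) (a : ℕ → A) : ℝ :=
  ∑ i ∈ Finset.range n, f (s i) (a i) (s (i + 1))

section Aux
variable {S A : Type*}

lemma twalkWeight_rho_eq (r : S → A → S → ℝ) (V : S → ℝ) (ρ : S → A → S → ℝ)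
    (hρ : ∀ s a s', ρ s a s' = r s a s' - V s + V s')
    (n : ℕ) (s : ℕ → S) (a : ℕ → A) :
    twalkWeight ρ n s a = twalkWeight r n s a + (V (s n) - V (s 0)) := by
  unfold twalkWeight
  have h : ∀ i, ρ (s i) (a i) (s (i+1)) = r (s i) (a i) (s (i+1)) + (V (s (i+1)) - V (s i)) := by
    intro i; rw [hρ]; ring
  simp_rw [h]
  rw [Finset.sum_add_distrib, Finset.sum_range_sub (fun i => V (s i))]

lemma step_mod (n : ℕ) (hn : 0 < n) (s : ℕ → S) (hs : s n = s 0) (t : ℕ) :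
    s ((t + 1) % n) = s (t % n + 1) := by
  have h1 : (t+1) % n = (t % n + 1) % n := by simp [Nat.add_mod]
  rcases Nat.lt_or_ge (t % n + 1) n with h | h
  · rw [h1, Nat.mod_eq_of_lt h]
  · have h2 : t % n + 1 = n := by have := Nat.mod_lt t hn; omega
    rw [h1, h2, Nat.mod_self, ← hs]

lemma repeat_cycle (T : S → A → S → Prop) (f : S → A → S → ℝ)
    (n : ℕ) (hn : 0 < n) (s : ℕ → S) (a : ℕ → A)
    (hw : IsTWalk T n s a) (hs : s n = s 0) (k : ℕ) :
    IsTWalk T (k*n) (fun t => s (t % n)) (fun t => a (t % n)) ∧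
    twalkWeight f (k*n) (fun t => s (t % n)) (fun t => a (t % n))
      = k * twalkWeight f n s a := by
  constructor
  · intro t _
    simp only []
    rw [step_mod n hn s hs t]
    exact hw (t % n) (Nat.mod_lt t hn)
  · induction k with
    | zero => simp [twalkWeight]
    | succ k ih =>
      have hkn : (k+1)*n = k*n + n := by ring
      rw [hkn]
      unfold twalkWeight at ih ⊢
      rw [Finset.sum_range_add, ih]
      have h2 : ∀ t ∈ Finset.range n,
          f (s ((k*n + t) % n)) (a ((k*n + t) % n)) (s ((k*n + t + 1) % n))
            = f (s t) (a t) (s (t+1)) := by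
        intro t ht
        have ht' : t < n := Finset.mem_range.mp ht
        have e1 : (k*n + t) % n = t := by
          rw [mul_comm, Nat.mul_add_mod, Nat.mod_eq_of_lt ht']
        have e2 : s ((k*n + t + 1) % n) = s (t + 1) := by
          rw [step_mod n hn s hs, e1]
        rw [e1, e2]
      rw [Finset.sum_congr rfl h2]
      push_cast
      ring

lemma twalk_concat (T : S → A → S → Prop) (f : S → A → S → ℝ)
    (m : ℕ) (u : ℕ → S) (b : ℕ → A) (n : ℕ) (s : ℕ → S) (a : ℕ → A)
    (h1 : IsTWalk T m u b) (h2 : IsTWalk T n s a) (hub : u m = s 0) :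
    IsTWalk T (m+n) (fun t => if t < m then u t else s (t - m))
        (fun t => if t < m then b t else a (t - m)) ∧
      twalkWeight f (m+n) (fun t => if t < m then u t else s (t - m))
        (fun t => if t < m then b t else a (t - m))
        = twalkWeight f m u b + twalkWeight f n s a ∧
      (if (0:ℕ) < m then u 0 else s (0 - m)) = u 0 ∧
      (if m + n < m then u (m+n) else s (m + n - m)) = s n := by
  set w : ℕ → S := fun t => if t < m then u t else s (t - m) with hw
  set c : ℕ → A := fun t => if t < m then b t else a (t - m) with hc
  have hwlt : ∀ t, t < m → w t = u t := by intro t ht; simp [hw, ht]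
  have hwge : ∀ t, m ≤ t → w t = s (t - m) := by
    intro t ht; simp [hw, Nat.not_lt.mpr ht]
  have hwm : ∀ t, t ≤ m → w t = u t := by
    intro t ht
    rcases Nat.lt_or_ge t m with h | h
    · exact hwlt t h
    · have : t = m := le_antisymm ht h
      subst this
      rw [hwge t le_rfl, Nat.sub_self, ← hub]
  refine ⟨?_, ?_, ?_, ?_⟩
  · intro t ht
    rcases Nat.lt_or_ge t m with h | h
    · rw [hwlt t h, hwm (t+1) h]
      simp only [hc, if_pos h]
      exact h1 t h
    · rw [hwge t h, hwge (t+1) (le_trans h (Nat.le_succ t))]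
      simp only [hc, Nat.not_lt.mpr h, if_false]
      have : t + 1 - m = t - m + 1 := by omega
      rw [this]
      exact h2 (t - m) (by omega)
  · unfold twalkWeight
    rw [Finset.sum_range_add]
    congr 1
    · apply Finset.sum_congr rfl
      intro t ht
      have ht' : t < m := Finset.mem_range.mp ht
      rw [hwlt t ht', hwm (t+1) ht']
      simp [hc, ht']
    · apply Finset.sum_congr rfl
      intro t ht
      have ht' : t < n := Finset.mem_range.mp ht
      rw [hwge (m+t) (by omega), hwge (m+t+1) (by omega)]
      simp only [hc, Nat.not_lt.mpr (Nat.le_add_right m t), if_false]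
      congr 2 <;> omega
  · exact hwm 0 (Nat.zero_le m)
  · have := hwge (m+n) (Nat.le_add_right m n)
    simpa using this

lemma twalk_remove_cycle (T : S → A → S → Prop) (f : S → A → S → ℝ)
    (n i j : ℕ) (hij : i < j) (hjn : j ≤ n)
    (s : ℕ → S) (a : ℕ → A) (hw : IsTWalk T n s a) (hss : s i = s j) :
    ∃ s' a', IsTWalk T (n - (j - i)) s' a' ∧ s' 0 = s 0 ∧
      twalkWeight f n s a =
        twalkWeight f (n - (j - i)) s' a' +
          twalkWeight f (j - i) (fun k => s (i + k)) (fun k => a (i + k)) := by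
  refine ⟨fun k => if k < i then s k else s (k + (j - i)),
          fun k => if k < i then a k else a (k + (j - i)), ?_, ?_, ?_⟩
  case _ =>
    intro k hk
    rcases Nat.lt_or_ge k i with h | h
    · simp only [if_pos h]
      have hk1 : (if k + 1 < i then s (k+1) else s (k+1+(j-i))) = s (k+1) := by
        rcases Nat.lt_or_ge (k+1) i with h' | h'
        · rw [if_pos h']
        · have hki : k + 1 = i := by omega
          rw [if_neg (by omega), hki, show i + (j - i) = j by omega, ← hss]
      rw [hk1]
      exact hw k (by omega)
    · simp only [if_neg (by omega : ¬ k < i), if_neg (by omega : ¬ k + 1 < i)]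
      rw [show k + 1 + (j - i) = k + (j - i) + 1 by omega]
      exact hw (k + (j - i)) (by omega)
  case _ =>
    show (if 0 < i then s 0 else s (0 + (j - i))) = s 0
    rcases Nat.lt_or_ge 0 i with h | h
    · rw [if_pos h]
    · have hi : i = 0 := by omega
      rw [if_neg (by omega), show 0 + (j - i) = j by omega, ← hss, hi]
  case _ =>
    unfold twalkWeight
    have hsplit : n = i + ((j - i) + (n - j)) := by omega
    have hsplit2 : n - (j - i) = i + (n - j) := by omega
    conv_lhs => rw [hsplit, Finset.sum_range_add, Finset.sum_range_add]
    rw [hsplit2, Finset.sum_range_add]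
    have e1 : ∀ k ∈ Finset.range i,
        f ((fun k => if k < i then s k else s (k + (j-i))) k)
          ((fun k => if k < i then a k else a (k + (j-i))) k)
          ((fun k => if k < i then s k else s (k + (j-i))) (k+1))
          = f (s k) (a k) (s (k+1)) := by
      intro k hk
      have hk' : k < i := Finset.mem_range.mp hk
      simp only [if_pos hk']
      rcases Nat.lt_or_ge (k+1) i with h' | h'
      · rw [if_pos h']
      · have hki : k + 1 = i := by omega
        rw [if_neg (by omega), hki, show i + (j - i) = j by omega, ← hss]
    have e2 : ∀ k ∈ Finset.range (n - j),
        f ((fun k => if k < i then s k else s (k + (j-i))) (i+k))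
          ((fun k => if k < i then a k else a (k + (j-i))) (i+k))
          ((fun k => if k < i then s k else s (k + (j-i))) (i+k+1))
          = f (s (i + ((j-i) + k))) (a (i + ((j-i) + k))) (s (i + ((j-i) + k) + 1)) := by
      intro k hk
      simp only [if_neg (by omega : ¬ i + k < i), if_neg (by omega : ¬ i + k + 1 < i)]
      congr 2 <;> omega
    have e3 : ∀ k ∈ Finset.range (j - i),
        f ((fun k => s (i + k)) k) ((fun k => a (i + k)) k) ((fun k => s (i + k)) (k+1))
          = f (s (i + k)) (a (i + k)) (s (i + k + 1)) := by
      intro k _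
      show f (s (i + k)) (a (i + k)) (s (i + (k+1))) = _
      rw [show i + (k+1) = i + k + 1 by omega]
    rw [Finset.sum_congr rfl e1, Finset.sum_congr rfl e2, Finset.sum_congr rfl e3]
    ring

end Aux

/-- Termination, graph formulation: the ρ-weights of walks starting at `s₀` are bounded
above iff no positive-r-weight closed walk starts at a state reachable from `s₀`. -/
theorem bddAbove_shaped_iff_no_positive_cycle {S A : Type*} [Fintype S] [Fintype A]
    (T : S → A → S → Prop) (r : S → A → S → ℝ) (V : S → ℝ)
    (ρ : S → A → S → ℝ)
    (hρ : ∀ s a s', ρ s a s' = r s a s' - V s + V s')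
    (s₀ : S) :
    BddAbove {x : ℝ | ∃ (n : ℕ) (s : ℕ → S) (a : ℕ → A),
        IsTWalk T n s a ∧ s 0 = s₀ ∧ twalkWeight ρ n s a = x} ↔
      ¬ ∃ (n : ℕ) (s : ℕ → S) (a : ℕ → A), IsTWalk T n s a ∧ s n = s 0 ∧ 1 ≤ n ∧
          0 < twalkWeight r n s a ∧
          ∃ (m : ℕ) (u : ℕ → S) (b : ℕ → A), IsTWalk T m u b ∧ u 0 = s₀ ∧ u m = s 0 := by
  constructor
  · rintro ⟨M, hM⟩ ⟨n, s, a, hw, hclosed, hn1, hpos, m, u, b, hwu, hu0, hum⟩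
    have hn : 0 < n := hn1
    have hw0 : 0 < twalkWeight ρ n s a := by
      rw [twalkWeight_rho_eq r V ρ hρ, hclosed]
      simpa using hpos
    have key : ∀ k : ℕ, twalkWeight ρ m u b + k * twalkWeight ρ n s a ≤ M := by
      intro k
      obtain ⟨hrw, hrsum⟩ := repeat_cycle T ρ n hn s a hw hclosed k
      have hub : u m = (fun t => s (t % n)) 0 := by simpa using hum
      obtain ⟨cw, csum, c0, _⟩ :=
        twalk_concat T ρ m u b (k*n) (fun t => s (t % n)) (fun t => a (t % n)) hwu hrw hub
      have hmem : twalkWeight ρ m u b + k * twalkWeight ρ n s a ∈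
          {x : ℝ | ∃ (n : ℕ) (s : ℕ → S) (a : ℕ → A),
            IsTWalk T n s a ∧ s 0 = s₀ ∧ twalkWeight ρ n s a = x} :=
        ⟨m + k*n, _, _, cw, c0.trans hu0, by rw [csum, hrsum]⟩
      exact hM hmem
    obtain ⟨k, hk⟩ := exists_nat_gt ((M - twalkWeight ρ m u b) / twalkWeight ρ n s a)
    rw [div_lt_iff₀ hw0] at hk
    have := key k
    linarith
  · intro hno
    obtain ⟨C, hC⟩ := (Set.finite_range (fun p : S × A × S => ρ p.1 p.2.1 p.2.2)).bddAbove
    have hC' : ∀ x y z, ρ x y z ≤ max C 0 :=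
      fun x y z => le_trans (hC ⟨(x,y,z), rfl⟩) (le_max_left _ _)
    have key : ∀ n (s : ℕ → S) (a : ℕ → A), IsTWalk T n s a → s 0 = s₀ →
        ∃ n' s' a', n' ≤ Fintype.card S ∧ IsTWalk T n' s' a' ∧
          twalkWeight ρ n s a ≤ twalkWeight ρ n' s' a' := by
      intro n
      induction n using Nat.strong_induction_on with
      | _ n ih =>
      intro s a hw h0
      rcases le_or_gt n (Fintype.card S) with hle | hgt
      · exact ⟨n, s, a, hle, hw, le_refl _⟩
      · obtain ⟨x, y, hxy, hfeq⟩ := Fintype.exists_ne_map_eq_of_card_lt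
          (fun k : Fin (Fintype.card S + 1) => s k) (by simp)
        have hvne : (x:ℕ) ≠ (y:ℕ) := fun h => hxy (Fin.ext h)
        have hxN := Nat.lt_succ_iff.mp x.isLt
        have hyN := Nat.lt_succ_iff.mp y.isLt
        have main : ∀ i j : ℕ, i < j → j ≤ Fintype.card S → s i = s j →
            ∃ n' s' a', n' ≤ Fintype.card S ∧ IsTWalk T n' s' a' ∧
              twalkWeight ρ n s a ≤ twalkWeight ρ n' s' a' := by
          intro i j hij hjN hss
          have hjn : j ≤ n := le_of_lt (lt_of_le_of_lt hjN hgt)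
          obtain ⟨s', a', hw', h0', hsplit⟩ := twalk_remove_cycle T ρ n i j hij hjn s a hw hss
          have hcyc_walk : IsTWalk T (j-i) (fun k => s (i+k)) (fun k => a (i+k)) := by
            intro k hk
            show T (s (i+k)) (a (i+k)) (s (i + (k+1)))
            rw [show i + (k+1) = i + k + 1 by omega]
            exact hw (i+k) (by omega)
          have hcyc_closed : (fun k => s (i+k)) (j-i) = (fun k => s (i+k)) 0 := by
            show s (i + (j-i)) = s (i+0)
            rw [show i + (j-i) = j by omega, show i + 0 = i by omega]
            exact hss.symm
          have hr_nonpos : twalkWeight r (j-i) (fun k => s (i+k)) (fun k => a (i+k)) ≤ 0 := by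
            by_contra hpos
            push_neg at hpos
            exact hno ⟨j-i, _, _, hcyc_walk, hcyc_closed, by omega, hpos,
              i, s, a, (fun t ht => hw t (by omega)), h0, by simp⟩
          have hρcyc : twalkWeight ρ (j-i) (fun k => s (i+k)) (fun k => a (i+k)) ≤ 0 := by
            rw [twalkWeight_rho_eq r V ρ hρ, show i + (j-i) = j by omega, Nat.add_zero, ← hss]
            simpa using hr_nonpos
          obtain ⟨n'', s'', a'', hle'', hw'', hge''⟩ :=
            ih (n - (j-i)) (by omega) s' a' hw' (by rw [h0']; exact h0)
          exact ⟨n'', s'', a'', hle'', hw'', by rw [hsplit]; linarith⟩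
        rcases Nat.lt_or_ge (x:ℕ) (y:ℕ) with h | h
        · exact main x y h hyN hfeq
        · exact main y x (by omega) hxN hfeq.symm
    refine ⟨(Fintype.card S : ℝ) * max C 0, ?_⟩
    rintro x ⟨n, s, a, hw, h0, rfl⟩
    obtain ⟨n', s', a', hle, hw', hge⟩ := key n s a hw h0
    have hbound : twalkWeight ρ n' s' a' ≤ (Fintype.card S : ℝ) * max C 0 := by
      unfold twalkWeight
      calc ∑ i ∈ Finset.range n', ρ (s' i) (a' i) (s' (i+1))
          ≤ (Finset.range n').card • max C 0 :=
            Finset.sum_le_card_nsmul _ _ _ (fun i _ => hC' _ _ _)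
        _ = (n' : ℝ) * max C 0 := by simp [nsmul_eq_mul]
        _ ≤ (Fintype.card S : ℝ) * max C 0 :=
            mul_le_mul_of_nonneg_right (by exact_mod_cast hle) (le_max_right C 0)
    linarith
end

section
/- (Optimality, graph formulation.) Call a state terminal if it has no outgoing allowed transition, and suppose V(s) = 0 for every terminal state s. If Π* is a walk from s₀ ending at a terminal state whose ρ-weight is maximal among all walks from s₀ ending at a terminal state, then the r-weight of Π* is also maximal among all walks from s₀ ending at a terminal state. -/
/-- A state is terminal if it has no outgoing allowed transition. -/
def Terminal {S A : Type*} (T : S → A → S → Prop) (s : S) : Prop :=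
  ¬ ∃ a s', T s a s'

/-- Optimality, graph formulation: if `V` vanishes on terminal states, a walk from `s₀`
to a terminal state maximizing the ρ-weight also maximizes the r-weight among walks
from `s₀` ending at terminal states. -/
theorem max_shaped_weight_is_max_reward {S A : Type*} [Fintype S] [Fintype A]
    (T : S → A → S → Prop) (r : S → A → S → ℝ) (V : S → ℝ)
    (ρ : S → A → S → ℝ)
    (hρ : ∀ s a s', ρ s a s' = r s a s' - V s + V s')
    (hV : ∀ s, Terminal T s → V s = 0)
    (s₀ : S) (n : ℕ) (s : ℕ → S) (a : ℕ → A)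
    (hwalk : IsTWalk T n s a) (hstart : s 0 = s₀) (hterm : Terminal T (s n))
    (hmax : ∀ m (u : ℕ → S) (b : ℕ → A), IsTWalk T m u b → u 0 = s₀ → Terminal T (u m) →
      twalkWeight ρ m u b ≤ twalkWeight ρ n s a) :
    ∀ m (u : ℕ → S) (b : ℕ → A), IsTWalk T m u b → u 0 = s₀ → Terminal T (u m) →
      twalkWeight r m u b ≤ twalkWeight r n s a := by
  have key : ∀ m (u : ℕ → S) (b : ℕ → A),
      twalkWeight ρ m u b = twalkWeight r m u b + V (u m) - V (u 0) := by
    intro m u b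
    induction m with
    | zero => simp [twalkWeight]
    | succ k ih =>
      simp only [twalkWeight, Finset.sum_range_succ] at *
      rw [ih, hρ]; ring
  intro m u b hw h0 ht
  have h1 := hmax m u b hw h0 ht
  rw [key m u b, key n s a, hV _ ht, hV _ hterm, h0, hstart] at h1
  linarith
end
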